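/- arXiv:2310.03230 — 4 statements merged into one kernel-verified Lean document; each statement's English description precedes it below -/
import Mathlib

section
/- For nonzero complex a, b, c, let α = [[i·a,0],[0,(i·a)⁻¹]], β = [[i·b, -i·b - i·b⁻¹],[0,(i·b)⁻¹]], γ = [[(i·c)⁻¹,0],[-i·c - i·c⁻¹, i·c]]. Then the trace of γ⁻¹·β⁻¹·α⁻¹·γ·β·α equals a²b²c² + a²b² + a²c² + b²c² + a² + b² + c² + a⁻² + b⁻² + c⁻² + (a²b²)⁻¹ + (a²c²)⁻¹ + (b²c²)⁻¹ + (a²b²c²)⁻¹ + 4. -/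
set_option maxHeartbeats 1000000


open Matrix Complex

theorem squish_hexagon_trace (a b c : ℂ) (ha : a ≠ 0) (hb : b ≠ 0) (hc : c ≠ 0) :
    let α : Matrix (Fin 2) (Fin 2) ℂ := !![I * a, 0; 0, (I * a)⁻¹]
    let β : Matrix (Fin 2) (Fin 2) ℂ := !![I * b, -(I * b) - I * b⁻¹; 0, (I * b)⁻¹]
    let γ : Matrix (Fin 2) (Fin 2) ℂ := !![(I * c)⁻¹, 0; -(I * c) - I * c⁻¹, I * c]
    (γ⁻¹ * β⁻¹ * α⁻¹ * γ * β * α).trace =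
      a ^ 2 * b ^ 2 * c ^ 2 + a ^ 2 * b ^ 2 + a ^ 2 * c ^ 2 + b ^ 2 * c ^ 2 +
        a ^ 2 + b ^ 2 + c ^ 2 + (a ^ 2)⁻¹ + (b ^ 2)⁻¹ + (c ^ 2)⁻¹ +
        (a ^ 2 * b ^ 2)⁻¹ + (a ^ 2 * c ^ 2)⁻¹ + (b ^ 2 * c ^ 2)⁻¹ +
        (a ^ 2 * b ^ 2 * c ^ 2)⁻¹ + 4 := by
  intro α β γ
  have hI : I ≠ 0 := I_ne_zero
  have hα : α⁻¹ = !![(I * a)⁻¹, 0; 0, I * a] := by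
    apply inv_eq_right_inv
    show α * _ = 1
    simp only [α]
    rw [show (1 : Matrix (Fin 2) (Fin 2) ℂ) = !![1,0;0,1] by simp [Matrix.one_fin_two]]
    ext i j
    fin_cases i <;> fin_cases j <;>
      simp [Matrix.mul_apply, Fin.sum_univ_two] <;>
      field_simp <;> ring_nf <;> simp [I_sq] <;> ring
  have hβ : β⁻¹ = !![(I * b)⁻¹, I * b + I * b⁻¹; 0, I * b] := by
    apply inv_eq_right_inv
    show β * _ = 1
    simp only [β]
    rw [show (1 : Matrix (Fin 2) (Fin 2) ℂ) = !![1,0;0,1] by simp [Matrix.one_fin_two]]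
    ext i j
    fin_cases i <;> fin_cases j <;>
      simp [Matrix.mul_apply, Fin.sum_univ_two] <;>
      field_simp <;> ring_nf <;> simp [I_sq] <;> ring
  have hγ : γ⁻¹ = !![I * c, 0; I * c + I * c⁻¹, (I * c)⁻¹] := by
    apply inv_eq_right_inv
    show γ * _ = 1
    simp only [γ]
    rw [show (1 : Matrix (Fin 2) (Fin 2) ℂ) = !![1,0;0,1] by simp [Matrix.one_fin_two]]
    ext i j
    fin_cases i <;> fin_cases j <;>
      simp [Matrix.mul_apply, Fin.sum_univ_two] <;>
      field_simp <;> ring_nf <;> simp [I_sq] <;> ring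
  rw [hα, hβ, hγ]
  simp only [α, β, γ, Matrix.trace_fin_two, Matrix.mul_apply, Fin.sum_univ_two]
  have h6 : (I:ℂ) ^ 6 = -1 := by
    simp [pow_succ, I_sq]
  simp [Matrix.cons_val_zero, Matrix.cons_val_one]
  simp only [mul_inv, inv_I, ← inv_pow]
  linear_combination (norm := ring)
    ((-1) * b⁻¹ ^ 2 * c⁻¹ ^ 2 * Complex.I ^ 6 + (-1) * b⁻¹ ^ 2 * c * c⁻¹ * Complex.I ^ 6 + (-1) * b * b⁻¹ * c⁻¹ ^ 2 * Complex.I ^ 6 + (-4) * b * b⁻¹ * c * c⁻¹ * Complex.I ^ 6 + (-1) * b * b⁻¹ * c ^ 2 * Complex.I ^ 6 + (-1) * b ^ 2 * c * c⁻¹ * Complex.I ^ 6 + (-1) * b ^ 2 * c ^ 2 * Complex.I ^ 6) * mul_inv_cancel₀ ha +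
    ((-1) * c⁻¹ ^ 2 * Complex.I ^ 6 + (-4) * c * c⁻¹ * Complex.I ^ 6 + (-1) * c ^ 2 * Complex.I ^ 6 + (-1) * a⁻¹ ^ 2 * c⁻¹ ^ 2 * Complex.I ^ 6 + (-1) * a⁻¹ ^ 2 * c * c⁻¹ * Complex.I ^ 6 + (-1) * a ^ 2 * c * c⁻¹ * Complex.I ^ 6 + (-1) * a ^ 2 * c ^ 2 * Complex.I ^ 6) * mul_inv_cancel₀ hb +
    ((-4) * Complex.I ^ 6 + (-1) * b⁻¹ ^ 2 * Complex.I ^ 6 + (-1) * b ^ 2 * Complex.I ^ 6 + (-1) * a⁻¹ ^ 2 * Complex.I ^ 6 + (-1) * a⁻¹ ^ 2 * b⁻¹ ^ 2 * Complex.I ^ 6 + (-1) * a ^ 2 * Complex.I ^ 6 + (-1) * a ^ 2 * b ^ 2 * Complex.I ^ 6) * mul_inv_cancel₀ hc +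
    ((-4) + (4) * Complex.I ^ 2 + (-4) * Complex.I ^ 4 + (-1) * c⁻¹ ^ 2 + c⁻¹ ^ 2 * Complex.I ^ 2 + (-1) * c⁻¹ ^ 2 * Complex.I ^ 4 + (-1) * c ^ 2 + c ^ 2 * Complex.I ^ 2 + (-1) * c ^ 2 * Complex.I ^ 4 + (-1) * b⁻¹ ^ 2 + b⁻¹ ^ 2 * Complex.I ^ 2 + (-1) * b⁻¹ ^ 2 * Complex.I ^ 4 + (-1) * b⁻¹ ^ 2 * c⁻¹ ^ 2 + b⁻¹ ^ 2 * c⁻¹ ^ 2 * Complex.I ^ 2 + (-1) * b⁻¹ ^ 2 * c⁻¹ ^ 2 * Complex.I ^ 4 + (-1) * b ^ 2 + b ^ 2 * Complex.I ^ 2 + (-1) * b ^ 2 * Complex.I ^ 4 + (-1) * b ^ 2 * c ^ 2 + b ^ 2 * c ^ 2 * Complex.I ^ 2 + (-1) * b ^ 2 * c ^ 2 * Complex.I ^ 4 + (-1) * a⁻¹ ^ 2 + a⁻¹ ^ 2 * Complex.I ^ 2 + (-1) * a⁻¹ ^ 2 * Complex.I ^ 4 + (-1) * a⁻¹ ^ 2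 * c⁻¹ ^ 2 + a⁻¹ ^ 2 * c⁻¹ ^ 2 * Complex.I ^ 2 + (-1) * a⁻¹ ^ 2 * c⁻¹ ^ 2 * Complex.I ^ 4 + (-1) * a⁻¹ ^ 2 * b⁻¹ ^ 2 + a⁻¹ ^ 2 * b⁻¹ ^ 2 * Complex.I ^ 2 + (-1) * a⁻¹ ^ 2 * b⁻¹ ^ 2 * Complex.I ^ 4 + (-1) * a⁻¹ ^ 2 * b⁻¹ ^ 2 * c⁻¹ ^ 2 + a⁻¹ ^ 2 * b⁻¹ ^ 2 * c⁻¹ ^ 2 * Complex.I ^ 2 + (-1) * a⁻¹ ^ 2 * b⁻¹ ^ 2 * c⁻¹ ^ 2 * Complex.I ^ 4 + (-1) * a ^ 2 + a ^ 2 * Complex.I ^ 2 + (-1) * a ^ 2 * Complex.I ^ 4 + (-1) * a ^ 2 * c ^ 2 + a ^ 2 * c ^ 2 * Complex.I ^ 2 + (-1) * a ^ 2 * c ^ 2 * Complex.I ^ 4 + (-1) * a ^ 2 * b ^ 2 + a ^ 2 * b ^ 2 * Complex.I ^ 2 + (-1) * a ^ 2 * b ^ 2 * Complex.I ^ 4 +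 (-1) * a ^ 2 * b ^ 2 * c ^ 2 + a ^ 2 * b ^ 2 * c ^ 2 * Complex.I ^ 2 + (-1) * a ^ 2 * b ^ 2 * c ^ 2 * Complex.I ^ 4) * Complex.I_sq
end

section
/- For nonzero complex a, b, c, the expression a²b²c²·Tr(γ⁻¹β⁻¹α⁻¹γβα) (with α, β, γ the squish-map connection matrices) is a Laurent polynomial in a, b, c whose value after substituting a² = r, b² = s, c² = t equals r²s²t² + r²s²t + r²st² + rs²t² + r²st + rs²t + rst² + 4rst + rs + st + rt + r + s + t + 1; in particular, the sum of its coefficients is 18. -/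
open Matrix Complex

/-- The generating polynomial for the 18 plane partitions in a `2 × 2 × 2` box that squish
to the single hexagon loop, in the variables `r, s, t`. -/
def hexGF (r s t : ℂ) : ℂ :=
  r ^ 2 * s ^ 2 * t ^ 2 + r ^ 2 * s ^ 2 * t + r ^ 2 * s * t ^ 2 + r * s ^ 2 * t ^ 2 +
    r ^ 2 * s * t + r * s ^ 2 * t + r * s * t ^ 2 + 4 * (r * s * t) +
    r * s + s * t + r * t + r + s + t + 1

set_option maxHeartbeats 2000000 in
lemma squish_aux (x y z : ℂ) (hx : x ≠ 0) (hy : y ≠ 0) (hz : z ≠ 0) :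
    let A : Matrix (Fin 2) (Fin 2) ℂ := !![x, 0; 0, x⁻¹]
    let B : Matrix (Fin 2) (Fin 2) ℂ := !![y, y⁻¹ - y; 0, y⁻¹]
    let C : Matrix (Fin 2) (Fin 2) ℂ := !![z⁻¹, 0; z⁻¹ - z, z]
    (-x ^ 2) * (-y ^ 2) * (-z ^ 2) * (C⁻¹ * B⁻¹ * A⁻¹ * C * B * A).trace =
      hexGF (-x ^ 2) (-y ^ 2) (-z ^ 2) := by
  intro A B C
  have hA : A⁻¹ = !![x⁻¹, 0; 0, x] := by
    apply Matrix.inv_eq_right_inv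
    ext i j
    fin_cases i <;> fin_cases j <;>
      simp [A, Matrix.mul_apply, Fin.sum_univ_two] <;> field_simp
  have hB : B⁻¹ = !![y⁻¹, y - y⁻¹; 0, y] := by
    apply Matrix.inv_eq_right_inv
    ext i j
    fin_cases i <;> fin_cases j <;>
      simp [B, Matrix.mul_apply, Fin.sum_univ_two] <;> field_simp <;> ring
  have hC : C⁻¹ = !![z, 0; z - z⁻¹, z⁻¹] := by
    apply Matrix.inv_eq_right_inv
    ext i j
    fin_cases i <;> fin_cases j <;>
      simp [C, Matrix.mul_apply, Fin.sum_univ_two] <;> field_simp <;> ring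
  rw [hA, hB, hC]
  simp only [A, B, C, Matrix.mul_fin_two, Matrix.trace_fin_two_of, hexGF]
  set u := x⁻¹ with hu'
  set v := y⁻¹ with hv'
  set w := z⁻¹ with hw'
  have hu : x * u = 1 := mul_inv_cancel₀ hx
  have hv : y * v = 1 := mul_inv_cancel₀ hy
  have hw : z * w = 1 := mul_inv_cancel₀ hz
  linear_combination (y ^ 2*v ^ 2*z ^ 2*w ^ 2 - y ^ 2*v ^ 2*z ^ 3*w - y ^ 3*v*z ^ 2*w ^ 2 + y ^ 3*v*z ^ 3*w + x*u*y ^ 2*v ^ 2*z ^ 2*w ^ 2 - x*u*y ^ 2*v ^ 2*z ^ 3*w - x*u*y ^ 3*v*z ^ 2*w ^ 2 + x*u*y ^ 3*v*z ^ 3*w - x ^ 2*y ^ 2*v ^ 2*z ^ 2*w ^ 2 + x ^ 2*y ^ 2*v ^ 2*z ^ 3*w + x ^ 2*y ^ 3*v*z ^ 2*w ^ 2 - 4*x ^ 2*y ^ 3*v*z ^ 3*w + x ^ 2*y ^ 3*v*z ^ 4 + x ^ 2*y ^ 4*z ^ 3*w - x ^ 2*y ^ 4*z ^ 4) * hu 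+
    (z ^ 2*w ^ 2 - z ^ 3*w + y*v*z ^ 2*w ^ 2 - y*v*z ^ 3*w - y ^ 2*z ^ 2*w ^ 2 + y ^ 2*z ^ 3*w - x ^ 2*z ^ 2*w ^ 2 + x ^ 2*z ^ 3*w - x ^ 2*y*v*z ^ 2*w ^ 2 + x ^ 2*y*v*z ^ 3*w + x ^ 2*y ^ 2*z ^ 2*w ^ 2 - 4*x ^ 2*y ^ 2*z ^ 3*w + x ^ 2*y ^ 2*z ^ 4 + x ^ 4*y ^ 2*z ^ 3*w - x ^ 4*y ^ 2*z ^ 4) * hv +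
    (1 + z*w - z ^ 2 - y ^ 2 - y ^ 2*z*w + y ^ 2*z ^ 2 - x ^ 2 - x ^ 2*z*w + x ^ 2*z ^ 2 + x ^ 2*y ^ 2 + x ^ 2*y ^ 2*z*w - 4*x ^ 2*y ^ 2*z ^ 2 + x ^ 2*y ^ 4*z ^ 2 + x ^ 4*y ^ 2*z ^ 2 - x ^ 4*y ^ 4*z ^ 2) * hw

theorem squish_hexagon_weighted_trace (a b c : ℂ) (ha : a ≠ 0) (hb : b ≠ 0) (hc : c ≠ 0) :
    let α : Matrix (Fin 2) (Fin 2) ℂ := !![I * a, 0; 0, (I * a)⁻¹]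
    let β : Matrix (Fin 2) (Fin 2) ℂ := !![I * b, -(I * b) - I * b⁻¹; 0, (I * b)⁻¹]
    let γ : Matrix (Fin 2) (Fin 2) ℂ := !![(I * c)⁻¹, 0; -(I * c) - I * c⁻¹, I * c]
    a ^ 2 * b ^ 2 * c ^ 2 * (γ⁻¹ * β⁻¹ * α⁻¹ * γ * β * α).trace =
      hexGF (a ^ 2) (b ^ 2) (c ^ 2) ∧ hexGF 1 1 1 = 18 := by
  intro α β γ
  have hIa : I * a ≠ 0 := mul_ne_zero I_ne_zero ha
  have hIb : I * b ≠ 0 := mul_ne_zero I_ne_zero hb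
  have hIc : I * c ≠ 0 := mul_ne_zero I_ne_zero hc
  constructor
  · have key := squish_aux (I * a) (I * b) (I * c) hIa hIb hIc
    simp only at key
    have eβ : -(I * b) - I * b⁻¹ = (I * b)⁻¹ - I * b := by
      rw [_root_.mul_inv_rev, Complex.inv_I]; ring
    have eγ : -(I * c) - I * c⁻¹ = (I * c)⁻¹ - I * c := by
      rw [_root_.mul_inv_rev, Complex.inv_I]; ring
    have ea : -(I * a) ^ 2 = a ^ 2 := by
      rw [mul_pow, Complex.I_sq]; ring
    have eb : -(I * b) ^ 2 = b ^ 2 := by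
      rw [mul_pow, Complex.I_sq]; ring
    have ec : -(I * c) ^ 2 = c ^ 2 := by
      rw [mul_pow, Complex.I_sq]; ring
    rw [ea, eb, ec] at key
    show a ^ 2 * b ^ 2 * c ^ 2 *
      (!![(I * c)⁻¹, 0; -(I * c) - I * c⁻¹, I * c]⁻¹ *
        !![I * b, -(I * b) - I * b⁻¹; 0, (I * b)⁻¹]⁻¹ *
        !![I * a, 0; 0, (I * a)⁻¹]⁻¹ *
        !![(I * c)⁻¹, 0; -(I * c) - I * c⁻¹, I * c] *
        !![I * b, -(I * b) - I * b⁻¹; 0, (I * b)⁻¹] *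
        !![I * a, 0; 0, (I * a)⁻¹]).trace = _
    rw [eβ, eγ]
    linear_combination key
  · norm_num [hexGF]
end

section
/- Setting a = b = c = ω a primitive 8th root of unity in the squish-map connection matrices α, β, γ, the product γ⁻¹·β⁻¹·α⁻¹·γ·β·α around a single hexagon equals -I, where I is the 2×2 identity matrix. -/
/-!
Put `u = iω`. Then `u⁴ = ω⁴ = -1` and `-iω - i/ω = u⁻¹ - u`, so only `u` matters. The product is
`(αβγ)⁻¹ (γβα)`, hence it suffices that `γβα = -αβγ`. Comparing entries, this comes down to
`u² + u⁻² = 0` and `(u⁻¹ - u)² = -2`, both consequences of `u⁴ = -1`.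
-/

open Matrix Complex

theorem Matrix.inv_mul_inv_mul_inv_mul_eq_neg_one {n R : Type*} [Fintype n] [DecidableEq n]
    [CommRing R] {A B C : Matrix n n R} (hdet : IsUnit (A * B * C).det)
    (h : C * B * A = -(A * B * C)) : C⁻¹ * B⁻¹ * A⁻¹ * C * B * A = -1 := by
  have hrev : C⁻¹ * B⁻¹ * A⁻¹ = (A * B * C)⁻¹ := by
    simp only [Matrix.mul_inv_rev, Matrix.mul_assoc]
  calc C⁻¹ * B⁻¹ * A⁻¹ * C * B * A = (A * B * C)⁻¹ * (C * B * A) := by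
        rw [← hrev]; simp only [Matrix.mul_assoc]
    _ = -1 := by rw [h, Matrix.mul_neg, nonsing_inv_mul _ hdet]

section Squish

variable {K : Type*} [Field K] (u : K)

def squishAlpha : Matrix (Fin 2) (Fin 2) K := !![u, 0; 0, u⁻¹]

def squishBeta : Matrix (Fin 2) (Fin 2) K := !![u, u⁻¹ - u; 0, u⁻¹]

def squishGamma : Matrix (Fin 2) (Fin 2) K := !![u⁻¹, 0; u⁻¹ - u, u]

variable {u}

theorem det_squishAlpha_mul_squishBeta_mul_squishGamma (hu : u ≠ 0) :
    (squishAlpha u * squishBeta u * squishGamma u).det = 1 := by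
  rw [det_mul, det_mul]
  simp [squishAlpha, squishBeta, squishGamma, det_fin_two_of, hu]

theorem squishGamma_mul_squishBeta_mul_squishAlpha (hu : u ^ 4 = -1) :
    squishGamma u * squishBeta u * squishAlpha u
      = -(squishAlpha u * squishBeta u * squishGamma u) := by
  have hu0 : u ≠ 0 := by rintro rfl; norm_num at hu
  have hinv : u * u⁻¹ = 1 := mul_inv_cancel₀ hu0
  have hsq : u⁻¹ ^ 2 = -u ^ 2 := by
    field_simp; linear_combination hu
  have hd : (u⁻¹ - u) ^ 2 = -2 := by linear_combination hsq - 2 * hinv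
  simp only [squishAlpha, squishBeta, squishGamma, mul_fin_two]
  ext i j
  fin_cases i <;> fin_cases j <;>
    simp only [mul_zero, add_zero, zero_mul, zero_add, Fin.zero_eta, Fin.mk_one, Fin.isValue,
      of_apply, cons_val', cons_val_zero, cons_val_one, cons_val_fin_one, inv_mul_mul_self,
      mul_self_mul_inv, Matrix.neg_apply]
  · linear_combination u * hd
  · linear_combination (u⁻¹ - u) * hsq
  · linear_combination (u⁻¹ - u) * hsq
  · linear_combination u⁻¹ * hd + 2 * u⁻¹ * hinv

theorem squish_hexagon (hu : u ^ 4 = -1) :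
    (squishGamma u)⁻¹ * (squishBeta u)⁻¹ * (squishAlpha u)⁻¹
      * squishGamma u * squishBeta u * squishAlpha u = -1 := by
  have hu0 : u ≠ 0 := by rintro rfl; norm_num at hu
  refine inv_mul_inv_mul_inv_mul_eq_neg_one ?_ (squishGamma_mul_squishBeta_mul_squishAlpha hu)
  rw [det_squishAlpha_mul_squishBeta_mul_squishGamma hu0]
  exact isUnit_one

end Squish

theorem squish_eighth_root_hexagon_general (ω : ℂ) (h4 : ω ^ 4 = -1) :
    let α : Matrix (Fin 2) (Fin 2) ℂ := !![I * ω, 0; 0, (I * ω)⁻¹]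
    let β : Matrix (Fin 2) (Fin 2) ℂ := !![I * ω, -(I * ω) - I * ω⁻¹; 0, (I * ω)⁻¹]
    let γ : Matrix (Fin 2) (Fin 2) ℂ := !![(I * ω)⁻¹, 0; -(I * ω) - I * ω⁻¹, I * ω]
    γ⁻¹ * β⁻¹ * α⁻¹ * γ * β * α = -1 := by
  have hu : (I * ω) ^ 4 = -1 := by rw [mul_pow, I_pow_four, one_mul, h4]
  have hoff : -(I * ω) - I * ω⁻¹ = (I * ω)⁻¹ - I * ω := by
    rw [mul_inv, inv_I]; ring
  rw [hoff]
  exact squish_hexagon hu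

theorem squish_eighth_root_hexagon (ω : ℂ) (h8 : ω ^ 8 = 1) (h4 : ω ^ 4 = -1) :
    let α : Matrix (Fin 2) (Fin 2) ℂ := !![I * ω, 0; 0, (I * ω)⁻¹]
    let β : Matrix (Fin 2) (Fin 2) ℂ := !![I * ω, -(I * ω) - I * ω⁻¹; 0, (I * ω)⁻¹]
    let γ : Matrix (Fin 2) (Fin 2) ℂ := !![(I * ω)⁻¹, 0; -(I * ω) - I * ω⁻¹, I * ω]
    γ⁻¹ * β⁻¹ * α⁻¹ * γ * β * α = -1 :=
  squish_eighth_root_hexagon_general ω h4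
end

section
/- For nonzero complex a, b, c with α, β, γ the squish-map connection matrices, the (1,1) entry of γ⁻¹β⁻¹α⁻¹γβα equals a²b²c² + a²b² + a²c² + a² + 1. -/
open Matrix Complex

/-
With `α = diag(p, p⁻¹)`, `β = [[q, x], [0, q⁻¹]]`, `γ = [[r⁻¹, 0], [y, r]]` of determinant one,
following the first row of `γ⁻¹ β⁻¹ α⁻¹ γ β α` through the six factors collapses the `(0, 0)` entry
to `1 - p² (q x) (r y)`. For the squish matrices `p² = -a²`, `q x = b² + 1` and `r y = c² + 1`.
-/

lemma Matrix.inv_fin_two_upper {K : Type*} [Field K] {t : K} (ht : t ≠ 0) (x : K) :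
    (!![t, x; 0, t⁻¹])⁻¹ = !![t⁻¹, -x; 0, t] :=
  inv_eq_left_inv <| by simp [ht, mul_comm, one_fin_two]

lemma Matrix.inv_fin_two_lower {K : Type*} [Field K] {t : K} (ht : t ≠ 0) (y : K) :
    (!![t⁻¹, 0; y, t])⁻¹ = !![t, 0; -y, t⁻¹] :=
  inv_eq_left_inv <| by simp [ht, mul_comm, one_fin_two]

lemma hexagon_apply_zero_zero {K : Type*} [Field K] {p q r : K} (hp : p ≠ 0) (hq : q ≠ 0)
    (hr : r ≠ 0) (x y : K) :
    let α : Matrix (Fin 2) (Fin 2) K := !![p, 0; 0, p⁻¹]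
    let β : Matrix (Fin 2) (Fin 2) K := !![q, x; 0, q⁻¹]
    let γ : Matrix (Fin 2) (Fin 2) K := !![r⁻¹, 0; y, r]
    (γ⁻¹ * β⁻¹ * α⁻¹ * γ * β * α) 0 0 = 1 - p ^ 2 * (q * x) * (r * y) := by
  intro α β γ
  rw [inv_fin_two_lower hr, inv_fin_two_upper hq, inv_fin_two_upper hp]
  simp only [α, β, γ, mul_fin_two, of_apply, cons_val', cons_val_zero, empty_val', cons_val_fin_one]
  field_simp
  ring

lemma Complex.I_mul_mul_neg_I_mul_sub_I_mul_inv {t : ℂ} (ht : t ≠ 0) :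
    I * t * (-(I * t) - I * t⁻¹) = t ^ 2 + 1 := by
  field_simp
  linear_combination -(t ^ 2 + 1) * I_sq

theorem squish_hexagon_entry (a b c : ℂ) (ha : a ≠ 0) (hb : b ≠ 0) (hc : c ≠ 0) :
    let α : Matrix (Fin 2) (Fin 2) ℂ := !![I * a, 0; 0, (I * a)⁻¹]
    let β : Matrix (Fin 2) (Fin 2) ℂ := !![I * b, -(I * b) - I * b⁻¹; 0, (I * b)⁻¹]
    let γ : Matrix (Fin 2) (Fin 2) ℂ := !![(I * c)⁻¹, 0; -(I * c) - I * c⁻¹, I * c]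
    (γ⁻¹ * β⁻¹ * α⁻¹ * γ * β * α) 0 0 =
      a ^ 2 * b ^ 2 * c ^ 2 + a ^ 2 * b ^ 2 + a ^ 2 * c ^ 2 + a ^ 2 + 1 := by
  refine (hexagon_apply_zero_zero (mul_ne_zero I_ne_zero ha) (mul_ne_zero I_ne_zero hb)
    (mul_ne_zero I_ne_zero hc) _ _).trans ?_
  rw [mul_pow, I_sq, I_mul_mul_neg_I_mul_sub_I_mul_inv hb, I_mul_mul_neg_I_mul_sub_I_mul_inv hc]
  ring
end
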